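/- Let G be a precompact Hausdorff topological group and let S be a subsemigroup of G that is locally compact in the subspace topology. Then S is a subgroup of G. -/

import Mathlib

/-!
The closure `H` of `S` is a subsemigroup. By total boundedness and the pigeonhole principle, the
powers of any `a ∈ S` come back arbitrarily close to `1`, so `a⁻¹ ∈ H` and `H` is a subgroup.
A locally compact subspace of a Hausdorff space is open in its closure, so `S` is a dense,
relatively open subsemigroup of `H`; for `g ∈ H` the relatively open set `g S⁻¹` then meets `S`,
whence `g ∈ S S ⊆ S`.
-/

open Filter Set
open scoped Topology Pointwise

theorem isLocallyClosed_of_locallyCompactSpace {X : Type*} [TopologicalSpace X] [T2Space X]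
    {s : Set X} [LocallyCompactSpace s] : IsLocallyClosed s := by
  refine ((isLocallyClosed_tfae s).out 0 3).mpr fun x hx ↦ ?_
  obtain ⟨K, hK, -, hKc⟩ := local_compact_nhds (x := (⟨x, hx⟩ : s)) univ_mem
  obtain ⟨V, hV, hVK⟩ := (nhds_subtype s ⟨x, hx⟩ ▸ hK :)
  obtain ⟨U, hUV, hU, hxU⟩ := mem_nhds_iff.mp hV
  have hUs : U ∩ s ⊆ (↑) '' K := fun y ⟨hyU, hys⟩ ↦ ⟨⟨y, hys⟩, hVK (hUV hyU), rfl⟩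
  refine ⟨U, hxU, hU, fun y hy ↦ ?_⟩
  obtain ⟨z, -, rfl⟩ := (hKc.image continuous_subtype_val).isClosed.closure_subset_iff.mpr hUs
    (hU.inter_closure hy)
  exact z.2

section TopologicalGroup

variable {G : Type*} [Group G] [TopologicalSpace G] [IsTopologicalGroup G]

theorem Subsemigroup.exists_subgroup_coe_eq_closure (S : Subsemigroup G)
    (hne : (S : Set G).Nonempty) (hinv : ∀ a ∈ S, a⁻¹ ∈ _root_.closure (S : Set G)) :
    ∃ H : Subgroup G, (H : Set G) = _root_.closure S := by
  have inv_mem {x : G} (hx : x ∈ _root_.closure (S : Set G)) :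
      x⁻¹ ∈ _root_.closure (S : Set G) :=
    closure_closure (s := (S : Set G)) ▸ map_mem_closure continuous_inv hx fun a ha ↦ hinv a ha
  obtain ⟨a, ha⟩ := hne
  refine ⟨{ S.topologicalClosure with
    one_mem' := ?_
    inv_mem' := inv_mem }, rfl⟩
  simpa using S.topologicalClosure.mul_mem (_root_.subset_closure ha) (hinv a ha)

/-- With `U` open and `U ∩ closure S = S`: for `g ∈ H` and `a ∈ S`, the open set
`{x | g * x⁻¹ ∈ U}` contains `a⁻¹ * g ∈ closure S`, so it meets `S` at some `s`; then
`g * s⁻¹ ∈ U ∩ H = S` and `g = (g * s⁻¹) * s ∈ S`. -/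
theorem Subsemigroup.coe_eq_of_isLocallyClosed (S : Subsemigroup G) (hne : (S : Set G).Nonempty)
    (hS : IsLocallyClosed (S : Set G)) {H : Subgroup G} (hH : (H : Set G) = _root_.closure S) :
    (S : Set G) = H := by
  have hSH : (S : Set G) ⊆ H := hH ▸ _root_.subset_closure
  refine hSH.antisymm fun g hg ↦ ?_
  obtain ⟨a, ha⟩ := hne
  set U := coborder (S : Set G)
  have hUS : U ∩ H ⊆ S := hH ▸ coborder_inter_closure.subset
  have hW : IsOpen ((g * ·⁻¹) ⁻¹' U) := hS.isOpen_coborder.preimage (by fun_prop)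
  have haW : a⁻¹ * g ∈ (g * ·⁻¹) ⁻¹' U := by
    simpa using subset_coborder ha
  have hag : a⁻¹ * g ∈ _root_.closure (S : Set G) :=
    hH ▸ (H.mul_mem (H.inv_mem (hSH ha)) hg : a⁻¹ * g ∈ (H : Set G))
  obtain ⟨s, hsW, hs⟩ := mem_closure_iff.mp hag _ hW haW
  have hgs : g * s⁻¹ ∈ S := hUS ⟨hsW, H.mul_mem hg (H.inv_mem (hSH hs))⟩
  simpa using S.mul_mem hgs hs

end TopologicalGroup

theorem Subsemigroup.pow_succ_mem {M : Type*} [Monoid M] (S : Subsemigroup M) {a : M}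
    (ha : a ∈ S) : ∀ n : ℕ, a ^ (n + 1) ∈ S
  | 0 => by simpa using ha
  | n + 1 => pow_succ a (n + 1) ▸ S.mul_mem (S.pow_succ_mem ha n) ha

section UniformGroup

variable {G : Type*} [Group G] [UniformSpace G] [IsUniformGroup G]

theorem exists_pow_mem_nhds_one (hG : TotallyBounded (univ : Set G)) (a : G) {U : Set G}
    (hU : U ∈ 𝓝 (1 : G)) : ∃ n, 0 < n ∧ a ^ n ∈ U := by
  obtain ⟨V, hV, hVU⟩ := exists_nhds_split_inv hU
  obtain ⟨t, ht, hcover⟩ :=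
    totallyBounded_iff_subset_finite_iUnion_nhds_one.mp hG _ (inv_mem_nhds_one G hV)
  have : Finite t := ht
  have hmem (k : ℕ) : ∃ y : t, a ^ k ∈ (y : G) • V⁻¹ := by
    obtain ⟨y, hy, hk⟩ := mem_iUnion₂.mp (hcover (mem_univ (a ^ k)))
    exact ⟨⟨y, hy⟩, hk⟩
  choose f hf using hmem
  -- if `a ^ m` and `a ^ n` lie in the same translate `y • V⁻¹`, then `a ^ (n - m) ∈ V * V⁻¹ ⊆ U`
  have close {m n : ℕ} (hmn : m < n) (hfmn : f m = f n) : a ^ (n - m) ∈ U := by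
    obtain ⟨v, hv, hvm⟩ := mem_smul_set.mp (hf m)
    obtain ⟨w, hw, hwn⟩ := mem_smul_set.mp (hf n)
    have : a ^ (n - m) = v⁻¹ * w := by
      rw [eq_inv_mul_of_mul_eq (pow_mul_pow_sub a hmn.le), ← hvm, ← hwn, hfmn, smul_eq_mul,
        smul_eq_mul]
      group
    simpa [this] using hVU _ hv _ hw
  obtain ⟨m, n, hne, hmn⟩ := Finite.exists_ne_map_eq_of_infinite f
  rcases hne.lt_or_gt with h | h
  · exact ⟨n - m, by omega, close h hmn⟩
  · exact ⟨m - n, by omega, close h hmn.symm⟩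

theorem Subsemigroup.inv_mem_closure_of_totallyBounded (hG : TotallyBounded (univ : Set G))
    (S : Subsemigroup G) {a : G} (ha : a ∈ S) : a⁻¹ ∈ _root_.closure (S : Set G) := by
  refine mem_closure_iff_nhds.mpr fun W hW ↦ ?_
  have hU : (a⁻¹ * ·) ⁻¹' W ∈ 𝓝 (1 : G) :=
    (continuous_const_mul a⁻¹).continuousAt.preimage_mem_nhds (by simpa using hW)
  obtain ⟨n, hn, hnW⟩ := exists_pow_mem_nhds_one hG (a ^ 2) hU
  refine ⟨a⁻¹ * (a ^ 2) ^ n, hnW, ?_⟩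
  obtain ⟨k, rfl⟩ : ∃ k, n = k + 1 := ⟨n - 1, by omega⟩
  have : a⁻¹ * (a ^ 2) ^ (k + 1) = a ^ (2 * k + 1) := by group
  exact this ▸ S.pow_succ_mem ha (2 * k)

end UniformGroup

/-- Any locally compact subsemigroup of a precompact Hausdorff topological
group is a subgroup. -/
theorem stmt_9 {G : Type*} [Group G] [UniformSpace G] [IsUniformGroup G]
    [T2Space G] (hpre : TotallyBounded (Set.univ : Set G))
    (S : Set G) (hne : S.Nonempty) (hmul : ∀ a ∈ S, ∀ b ∈ S, a * b ∈ S)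
    (hlc : LocallyCompactSpace S) :
    ∃ H : Subgroup G, S = (H : Set G) := by
  let T : Subsemigroup G := ⟨S, fun ha hb ↦ hmul _ ha _ hb⟩
  obtain ⟨H, hH⟩ := T.exists_subgroup_coe_eq_closure hne
    fun _ ↦ T.inv_mem_closure_of_totallyBounded hpre
  exact ⟨H, T.coe_eq_of_isLocallyClosed hne isLocallyClosed_of_locallyCompactSpace hH⟩
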